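/- Let α be a real number with 1/2 < α ≤ 1, let C₁, C₂ > 0, let f : [0,1] → ℝ satisfy |f(s) - f(t)| ≤ C₁|s - t|^α for all s, t ∈ [0,1], and let Γ = {(x, f(x)) : x ∈ [0,1]} be its graph. Let F : ℝ² → ℝ be a continuous function such that: (i) |F(a) - F(b)| ≤ ‖a - b‖ whenever a, b ∈ ℝ² and the closed segment from a to b is disjoint from Γ; and (ii) |F(a) - F(b)| ≤ C₂‖a - b‖^α for all a, b ∈ ℝ². Then for Lebesgue-almost every y ∈ ℝ, the function x ↦ F(x, y) is absolutely continuous on [0,1]. -/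

import Mathlib

open Set MeasureTheory

/-- `g` is absolutely continuous on `[0,1]` in the classical ε-δ sense. -/
def AbsolutelyContinuousOnUnitInterval (g : ℝ → ℝ) : Prop :=
  ∀ ε > (0 : ℝ), ∃ δ > (0 : ℝ), ∀ (n : ℕ) (a b : Fin n → ℝ),
    (∀ i, 0 ≤ a i ∧ a i < b i ∧ b i ≤ 1) →
    (Pairwise fun i j => Disjoint (Ioo (a i) (b i)) (Ioo (a j) (b j))) →
    (∑ i, (b i - a i)) < δ → (∑ i, |g (b i) - g (a i)|) < ε

/-!
Let `N_m(y)` be the number of dyadic intervals of length `2⁻ᵐ` in `[0,1]` that meet the level set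
`f⁻¹{y}`. Since `f` maps such an interval onto a set of measure at most `C₁ 2^{-mα}`, we get
`∫ N_m ≤ C₁ 2^{m(1-α)}`, so `∑ₘ N_m(y) 2^{-mα}` has integral `≤ C₁ ∑ₘ 2^{m(1-2α)} < ∞` because
`α > 1/2`; hence it is finite for almost every `y`.

Fix such a `y` and `g = F(·, y)`. An interval `(a, b)` avoiding `f⁻¹{y}` gives a horizontal segment
avoiding `Γ`, so `|g b - g a| ≤ b - a`. An interval meeting `f⁻¹{y}` with
`2^{-m-1} < b - a ≤ 2⁻ᵐ` contributes at most `C₂ 2^{-mα}` and meets one of the `N_m(y)` dyadic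
intervals of generation `m`, each of which is met by at most six disjoint such intervals. A family
of short intervals thus only sees large `m`, where the tail of `∑ₘ N_m(y) 2^{-mα}` is small.
-/

open Finset
open scoped ENNReal NNReal

def dyadicIcc (m k : ℕ) : Set ℝ := Icc (k * 2⁻¹ ^ m) ((k + 1) * 2⁻¹ ^ m)

open Classical in
noncomputable def dyadicCount (Z : Set ℝ) (m : ℕ) : ℕ :=
  #{k ∈ range (2 ^ m) | (dyadicIcc m k ∩ Z).Nonempty}

lemma dyadicIcc_subset_Icc_zero_one {m k : ℕ} (hk : k < 2 ^ m) : dyadicIcc m k ⊆ Icc 0 1 := by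
  have hk' : (k : ℝ) + 1 ≤ 2 ^ m := by exact_mod_cast hk
  refine Icc_subset_Icc (by positivity) ?_
  calc ((k : ℝ) + 1) * 2⁻¹ ^ m ≤ 2 ^ m * 2⁻¹ ^ m := by gcongr
    _ = 1 := by rw [← mul_pow]; norm_num

lemma exists_mem_dyadicIcc {x : ℝ} (hx : x ∈ Icc (0 : ℝ) 1) (m : ℕ) :
    ∃ k < 2 ^ m, x ∈ dyadicIcc m k := by
  have hscale : (2 : ℝ) ^ m * 2⁻¹ ^ m = 1 := by rw [← mul_pow]; norm_num
  rcases hx.2.lt_or_eq with hx1 | rfl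
  · have hx2 : 0 ≤ x * 2 ^ m := by positivity [hx.1]
    refine ⟨⌊x * 2 ^ m⌋₊, ?_, ?_, ?_⟩
    · exact_mod_cast (Nat.floor_lt hx2).2 (by push_cast; nlinarith [pow_pos (two_pos (α := ℝ)) m])
    · calc (⌊x * 2 ^ m⌋₊ : ℝ) * 2⁻¹ ^ m ≤ x * 2 ^ m * 2⁻¹ ^ m := by gcongr; exact Nat.floor_le hx2
        _ = x := by rw [mul_assoc, hscale, mul_one]
    · calc x = x * 2 ^ m * 2⁻¹ ^ m := by rw [mul_assoc, hscale, mul_one]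
        _ ≤ (⌊x * 2 ^ m⌋₊ + 1) * 2⁻¹ ^ m := by gcongr; exact (Nat.lt_floor_add_one _).le
  · refine ⟨2 ^ m - 1, Nat.sub_lt (by positivity) one_pos, ?_, ?_⟩ <;>
      rw [Nat.cast_sub Nat.one_le_two_pow, Nat.cast_pow, Nat.cast_ofNat, Nat.cast_one]
    · nlinarith [pow_pos (inv_pos.2 (two_pos (α := ℝ))) m]
    · rw [sub_add_cancel, hscale]

lemma sum_sub_le_of_pairwiseDisjoint_Ioo {ι : Type*} {s : Finset ι} {a b : ι → ℝ} {u v : ℝ}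
    (huv : u ≤ v) (hab : ∀ i ∈ s, a i ≤ b i)
    (hdisj : (s : Set ι).PairwiseDisjoint fun i => Ioo (a i) (b i))
    (hsub : ∀ i ∈ s, Ioo (a i) (b i) ⊆ Ioo u v) :
    ∑ i ∈ s, (b i - a i) ≤ v - u := by
  rw [← ENNReal.ofReal_le_ofReal_iff (sub_nonneg.2 huv)]
  calc ENNReal.ofReal (∑ i ∈ s, (b i - a i))
      = ∑ i ∈ s, ENNReal.ofReal (b i - a i) :=
        ENNReal.ofReal_sum_of_nonneg fun i hi => sub_nonneg.2 (hab i hi)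
    _ = volume (⋃ i ∈ s, Ioo (a i) (b i)) := by
      rw [measure_biUnion_finset hdisj fun _ _ => measurableSet_Ioo]
      simp only [Real.volume_Ioo]
    _ ≤ volume (Ioo u v) := measure_mono (iUnion₂_subset hsub)
    _ = ENNReal.ofReal (v - u) := Real.volume_Ioo

lemma card_le_six_of_meet_dyadicIcc {ι : Type*} {s : Finset ι} {a b : ι → ℝ} {m k : ℕ}
    (hdisj : (s : Set ι).PairwiseDisjoint fun i => Ioo (a i) (b i))
    (hlen : ∀ i ∈ s, 2⁻¹ ^ (m + 1) < b i - a i ∧ b i - a i ≤ 2⁻¹ ^ m)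
    (hmeet : ∀ i ∈ s, (Icc (a i) (b i) ∩ dyadicIcc m k).Nonempty) : #s ≤ 6 := by
  set d : ℝ := 2⁻¹ ^ m
  have hd : 0 < d := by positivity
  have hsub : ∀ i ∈ s, Ioo (a i) (b i) ⊆ Ioo (k * d - d) ((k + 1) * d + d) := by
    intro i hi
    obtain ⟨x, ⟨hax, hxb⟩, hkx, hxk⟩ := hmeet i hi
    change (k : ℝ) * d ≤ x at hkx
    change x ≤ (k + 1) * d at hxk
    exact Ioo_subset_Ioo (by linarith [(hlen i hi).2]) (by linarith [(hlen i hi).2])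
  have hupper : ∑ i ∈ s, (b i - a i) ≤ 3 * d := by
    have := sum_sub_le_of_pairwiseDisjoint_Ioo (by linarith) (fun i hi => ?_) hdisj hsub
    · linarith
    · linarith [(hlen i hi).1, pow_pos (inv_pos.2 (two_pos (α := ℝ))) (m + 1)]
  have hlower : #s • (d / 2) ≤ ∑ i ∈ s, (b i - a i) :=
    card_nsmul_le_sum _ _ _ fun i hi => by
      simpa [pow_succ, d, div_eq_mul_inv] using (hlen i hi).1.le
  rw [nsmul_eq_mul] at hlower
  have : (#s : ℝ) ≤ 6 := by nlinarith
  exact_mod_cast this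

lemma card_le_six_mul_dyadicCount {ι : Type*} {s : Finset ι} {a b : ι → ℝ} {Z : Set ℝ} {m : ℕ}
    (hab : ∀ i ∈ s, 0 ≤ a i ∧ b i ≤ 1)
    (hdisj : (s : Set ι).PairwiseDisjoint fun i => Ioo (a i) (b i))
    (hlen : ∀ i ∈ s, 2⁻¹ ^ (m + 1) < b i - a i ∧ b i - a i ≤ 2⁻¹ ^ m)
    (hZ : ∀ i ∈ s, (Icc (a i) (b i) ∩ Z).Nonempty) : #s ≤ 6 * dyadicCount Z m := by
  classical
  have hdyadic : ∀ i ∈ s, ∃ k ∈ {k ∈ range (2 ^ m) | (dyadicIcc m k ∩ Z).Nonempty},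
      (Icc (a i) (b i) ∩ dyadicIcc m k).Nonempty := by
    intro i hi
    obtain ⟨x, hxi, hxZ⟩ := hZ i hi
    obtain ⟨k, hk, hxk⟩ :=
      exists_mem_dyadicIcc ⟨(hab i hi).1.trans hxi.1, hxi.2.trans (hab i hi).2⟩ m
    exact ⟨k, mem_filter.2 ⟨mem_range.2 hk, x, hxk, hxZ⟩, x, hxi, hxk⟩
  choose! κ hκ using hdyadic
  unfold dyadicCount
  convert card_le_mul_card_image_of_maps_to (fun i hi => (hκ i hi).1) 6 fun k _ => ?_
  refine card_le_six_of_meet_dyadicIcc (k := k) (hdisj.subset (filter_subset _ _))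
    (fun i hi => hlen i (mem_filter.1 hi).1) fun i hi => ?_
  obtain ⟨his, rfl⟩ := mem_filter.1 hi
  exact (hκ i his).2

lemma exists_sum_rpow_le_sum_dyadicCount {ι : Type*} {s : Finset ι} {a b : ι → ℝ} {Z : Set ℝ}
    {α : ℝ} (hα : 0 ≤ α) {n : ℕ}
    (hab : ∀ i ∈ s, 0 ≤ a i ∧ a i < b i ∧ b i ≤ 1)
    (hdisj : (s : Set ι).PairwiseDisjoint fun i => Ioo (a i) (b i))
    (hlen : ∀ i ∈ s, b i - a i ≤ 2⁻¹ ^ n)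
    (hZ : ∀ i ∈ s, (Icc (a i) (b i) ∩ Z).Nonempty) :
    ∃ M : Finset ℕ, (∀ m ∈ M, n ≤ m) ∧
      ∑ i ∈ s, (b i - a i) ^ α ≤ 6 * ∑ m ∈ M, (dyadicCount Z m : ℝ) * (2⁻¹ ^ m) ^ α := by
  classical
  have hscale : ∀ i ∈ s, ∃ m : ℕ, 2⁻¹ ^ (m + 1) < b i - a i ∧ b i - a i ≤ 2⁻¹ ^ m :=
    fun i hi => exists_nat_pow_near_of_lt_one (sub_pos.2 (hab i hi).2.1)
      (by linarith [hab i hi]) (by norm_num) (by norm_num)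
  choose! μ hμ using hscale
  refine ⟨s.image μ, fun m hm => ?_, ?_⟩
  · obtain ⟨i, hi, rfl⟩ := mem_image.1 hm
    have := (pow_lt_pow_iff_right_of_lt_one₀ (by norm_num) (by norm_num)).1
      ((hμ i hi).1.trans_le (hlen i hi))
    omega
  calc ∑ i ∈ s, (b i - a i) ^ α ≤ ∑ i ∈ s, ((2⁻¹ : ℝ) ^ μ i) ^ α :=
        sum_le_sum fun i hi => Real.rpow_le_rpow (sub_pos.2 (hab i hi).2.1).le (hμ i hi).2 hα
    _ = ∑ m ∈ s.image μ, #{i ∈ s | μ i = m} • ((2⁻¹ : ℝ) ^ m) ^ α :=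
      sum_comp (fun m => ((2⁻¹ : ℝ) ^ m) ^ α) μ
    _ ≤ ∑ m ∈ s.image μ, (6 * dyadicCount Z m : ℕ) • ((2⁻¹ : ℝ) ^ m) ^ α := by
      refine sum_le_sum fun m _ => nsmul_le_nsmul_left (by positivity) ?_
      exact card_le_six_mul_dyadicCount (fun i hi => ⟨(hab i (mem_filter.1 hi).1).1,
        (hab i (mem_filter.1 hi).1).2.2⟩) (hdisj.subset (filter_subset _ _))
        (fun i hi => (mem_filter.1 hi).2 ▸ hμ i (mem_filter.1 hi).1)
        fun i hi => hZ i (mem_filter.1 hi).1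
    _ = 6 * ∑ m ∈ s.image μ, (dyadicCount Z m : ℝ) * (2⁻¹ ^ m) ^ α := by
      simp only [nsmul_eq_mul, mul_sum, Nat.cast_mul, Nat.cast_ofNat, mul_assoc]

theorem absolutelyContinuousOnUnitInterval_of_summable_dyadicCount {Z : Set ℝ} {g : ℝ → ℝ}
    {α C : ℝ} (hα : 0 ≤ α) (hC : 0 ≤ C)
    (hZ : Summable fun m => (dyadicCount Z m : ℝ) * (2⁻¹ ^ m) ^ α)
    (hlip : ∀ a b : ℝ, 0 ≤ a → a ≤ b → b ≤ 1 → Disjoint (Icc a b) Z → |g b - g a| ≤ b - a)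
    (hhol : ∀ a b : ℝ, 0 ≤ a → a ≤ b → b ≤ 1 → |g b - g a| ≤ C * (b - a) ^ α) :
    AbsolutelyContinuousOnUnitInterval g := by
  classical
  intro ε hε
  have hsmall : {t : ℝ | 6 * C * t < ε / 2} ∈ nhds 0 :=
    (isOpen_lt (by fun_prop) continuous_const).mem_nhds (by simpa using half_pos hε)
  obtain ⟨s, hs⟩ := summable_iff_vanishing.1 hZ _ hsmall
  obtain ⟨n, hsn⟩ := exists_nat_subset_range s
  refine ⟨min (ε / 2) (2⁻¹ ^ n), by positivity, fun N a b hab hdisj hsum => ?_⟩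
  have hlen : ∀ i, b i - a i < min (ε / 2) (2⁻¹ ^ n) := fun i =>
    (single_le_sum (fun j _ => sub_nonneg.2 (hab j).2.1.le) (mem_univ i)).trans_lt hsum
  set S : Finset (Fin N) := {i | (Icc (a i) (b i) ∩ Z).Nonempty}
  obtain ⟨M, hMn, hM⟩ := exists_sum_rpow_le_sum_dyadicCount hα (s := S) (fun i _ => hab i)
    (hdisj.set_pairwise _) (fun i _ => (hlen i).le.trans (min_le_right _ _))
    fun i hi => (mem_filter.1 hi).2
  have hMs : 6 * C * ∑ m ∈ M, (dyadicCount Z m : ℝ) * (2⁻¹ ^ m) ^ α < ε / 2 :=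
    hs M <| disjoint_left.2 fun m hm hms => (hMn m hm).not_gt (mem_range.1 (hsn hms))
  calc ∑ i, |g (b i) - g (a i)|
      = ∑ i ∈ Sᶜ, |g (b i) - g (a i)| + ∑ i ∈ S, |g (b i) - g (a i)| :=
        (sum_compl_add_sum S _).symm
    _ ≤ ∑ i ∈ Sᶜ, (b i - a i) + ∑ i ∈ S, C * (b i - a i) ^ α := by
        gcongr with i hi i hi
        · refine hlip _ _ (hab i).1 (hab i).2.1.le (hab i).2.2 ?_
          rw [disjoint_iff_inter_eq_empty, ← Set.not_nonempty_iff_eq_empty]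
          simpa [S] using hi
        · exact hhol _ _ (hab i).1 (hab i).2.1.le (hab i).2.2
    _ ≤ ∑ i, (b i - a i) + C * (6 * ∑ m ∈ M, (dyadicCount Z m : ℝ) * (2⁻¹ ^ m) ^ α) := by
        rw [← mul_sum]
        gcongr
        · exact fun i _ _ => sub_nonneg.2 (hab i).2.1.le
        · exact subset_univ _
    _ < ε / 2 + ε / 2 := by
        rw [← mul_assoc, mul_comm C]
        gcongr
        exact hsum.trans_le (min_le_left _ _)
    _ = ε := add_halves ε

theorem HolderOnWith.of_dist_le {X Y : Type*} [PseudoMetricSpace X] [PseudoMetricSpace Y]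
    {C r : ℝ≥0} {f : X → Y} {s : Set X}
    (h : ∀ x ∈ s, ∀ y ∈ s, dist (f x) (f y) ≤ C * dist x y ^ (r : ℝ)) :
    HolderOnWith C r f s := by
  intro x hx y hy
  rw [edist_dist, edist_dist,
    ENNReal.ofReal_rpow_of_nonneg (dist_nonneg (x := x) (y := y)) r.coe_nonneg,
    ← ENNReal.ofReal_coe_nnreal, ← ENNReal.ofReal_mul C.coe_nonneg]
  exact ENNReal.ofReal_le_ofReal (h x hx y hy)

section HolderGraph

variable {f : ℝ → ℝ} {C r : ℝ≥0}

lemma volume_image_dyadicIcc_le (hf : HolderOnWith C r f (Icc 0 1)) {m k : ℕ}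
    (hk : k < 2 ^ m) : volume (f '' dyadicIcc m k) ≤ C * ENNReal.ofReal ((2⁻¹ ^ m) ^ (r : ℝ)) :=
  calc volume (f '' dyadicIcc m k) ≤ Metric.ediam (f '' dyadicIcc m k) := Real.volume_le_diam _
    _ ≤ C * Metric.ediam (dyadicIcc m k) ^ (r : ℝ) :=
      hf.ediam_image_le_of_subset (dyadicIcc_subset_Icc_zero_one hk)
    _ = C * ENNReal.ofReal ((2⁻¹ ^ m) ^ (r : ℝ)) := by
      rw [dyadicIcc, Real.ediam_Icc, ← sub_mul, add_sub_cancel_left, one_mul,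
        ENNReal.ofReal_rpow_of_nonneg (by positivity) r.coe_nonneg]

lemma measurableSet_image_dyadicIcc (hf : ContinuousOn f (Icc 0 1)) {m k : ℕ}
    (hk : k < 2 ^ m) : MeasurableSet (f '' dyadicIcc m k) :=
  (isCompact_Icc.image_of_continuousOn
    (hf.mono (dyadicIcc_subset_Icc_zero_one hk))).isClosed.measurableSet

lemma dyadicCount_preimage_eq_sum_indicator (f : ℝ → ℝ) (m : ℕ) (y : ℝ) :
    (dyadicCount (f ⁻¹' {y}) m : ℝ≥0∞) =
      ∑ k ∈ range (2 ^ m), (f '' dyadicIcc m k).indicator 1 y := by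
  classical
  rw [dyadicCount, card_eq_sum_ones, Nat.cast_sum, Nat.cast_one, sum_filter]
  refine sum_congr rfl fun k _ => ?_
  simp only [indicator_apply, mem_image, Set.Nonempty, mem_inter_iff, Set.mem_preimage,
    mem_singleton_iff, Pi.one_apply]

lemma measurable_dyadicCount_preimage (hf : ContinuousOn f (Icc 0 1)) (m : ℕ) :
    Measurable fun y => (dyadicCount (f ⁻¹' {y}) m : ℝ≥0∞) := by
  simp only [dyadicCount_preimage_eq_sum_indicator]
  exact Finset.measurable_sum _ fun k hk =>
    measurable_one.indicator (measurableSet_image_dyadicIcc hf (mem_range.1 hk))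

lemma lintegral_dyadicCount_preimage_le (hf : HolderOnWith C r f (Icc 0 1)) (hr : 0 < r)
    (m : ℕ) : ∫⁻ y, (dyadicCount (f ⁻¹' {y}) m : ℝ≥0∞) ≤
      2 ^ m * (C * ENNReal.ofReal ((2⁻¹ ^ m) ^ (r : ℝ))) := by
  have hmeas k (hk : k ∈ range (2 ^ m)) :=
    measurableSet_image_dyadicIcc (hf.continuousOn hr) (mem_range.1 hk)
  simp only [dyadicCount_preimage_eq_sum_indicator]
  rw [lintegral_finsetSum _ fun k hk => measurable_one.indicator (hmeas k hk)]
  calc ∑ k ∈ range (2 ^ m), ∫⁻ y, (f '' dyadicIcc m k).indicator 1 y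
      = ∑ k ∈ range (2 ^ m), volume (f '' dyadicIcc m k) :=
        sum_congr rfl fun k hk => lintegral_indicator_one (hmeas k hk)
    _ ≤ ∑ _k ∈ range (2 ^ m), C * ENNReal.ofReal ((2⁻¹ ^ m) ^ (r : ℝ)) :=
        sum_le_sum fun k hk => volume_image_dyadicIcc_le hf (mem_range.1 hk)
    _ = 2 ^ m * (C * ENNReal.ofReal ((2⁻¹ ^ m) ^ (r : ℝ))) := by
        rw [sum_const, card_range, nsmul_eq_mul, Nat.cast_pow, Nat.cast_ofNat]

lemma lintegral_tsum_dyadicCount_preimage_lt_top (hf : HolderOnWith C r f (Icc 0 1))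
    (hr : 1 / 2 < (r : ℝ)) :
    ∫⁻ y, ∑' m, (dyadicCount (f ⁻¹' {y}) m : ℝ≥0∞) * ENNReal.ofReal ((2⁻¹ ^ m) ^ (r : ℝ)) < ∞ := by
  have hr0 : 0 < r := by rw [← NNReal.coe_pos]; linarith
  set q : ℝ := 2⁻¹ ^ (r : ℝ)
  have hw (m : ℕ) : ((2⁻¹ : ℝ) ^ m) ^ (r : ℝ) = q ^ m :=
    (Real.rpow_pow_comm (by norm_num) _ m).symm
  have hq : 2 * q ^ 2 < 1 := by
    have : q ^ 2 < 2⁻¹ ^ (1 : ℝ) := by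
      rw [← Real.rpow_mul_natCast (by norm_num)]
      exact Real.rpow_lt_rpow_of_exponent_gt (by norm_num) (by norm_num) (by push_cast; linarith)
    rw [Real.rpow_one] at this
    linarith
  have hmeas := measurable_dyadicCount_preimage (hf.continuousOn hr0)
  rw [lintegral_tsum fun m => ((hmeas m).mul_const _).aemeasurable]
  refine lt_of_le_of_lt (b := C * ∑' m, ENNReal.ofReal (2 * q ^ 2) ^ m) ?_
    (ENNReal.mul_lt_top ENNReal.coe_lt_top (tsum_geometric_lt_top.2 (ENNReal.ofReal_lt_one.2 hq)))
  rw [← ENNReal.tsum_mul_left]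
  refine ENNReal.tsum_le_tsum fun m => ?_
  rw [lintegral_mul_const _ (hmeas m), hw]
  calc (∫⁻ y, (dyadicCount (f ⁻¹' {y}) m : ℝ≥0∞)) * ENNReal.ofReal (q ^ m)
      ≤ 2 ^ m * (C * ENNReal.ofReal (q ^ m)) * ENNReal.ofReal (q ^ m) := by
        gcongr
        simpa only [hw] using lintegral_dyadicCount_preimage_le hf hr0 m
    _ = C * ENNReal.ofReal (2 * q ^ 2) ^ m := by
        rw [ENNReal.ofReal_mul zero_le_two, ENNReal.ofReal_pow (by positivity),
          ENNReal.ofReal_pow (by positivity), ENNReal.ofReal_ofNat]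
        ring

theorem ae_summable_dyadicCount_preimage (hf : HolderOnWith C r f (Icc 0 1))
    (hr : 1 / 2 < (r : ℝ)) :
    ∀ᵐ y, Summable fun m => (dyadicCount (f ⁻¹' {y}) m : ℝ) * (2⁻¹ ^ m) ^ (r : ℝ) := by
  have hr0 : 0 < r := by rw [← NNReal.coe_pos]; linarith
  have hmeas := measurable_dyadicCount_preimage (hf.continuousOn hr0)
  filter_upwards [ae_lt_top (Measurable.tsum fun m => (hmeas m).mul_const _)
    (lintegral_tsum_dyadicCount_preimage_lt_top hf hr).ne] with y hy
  refine (ENNReal.summable_toReal hy.ne).congr fun m => ?_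
  rw [ENNReal.toReal_mul, ENNReal.toReal_natCast, ENNReal.toReal_ofReal (by positivity)]

end HolderGraph

lemma segment_subset_compl_graph {f : ℝ → ℝ} {A : Set ℝ} {a b y : ℝ} (hab : a ≤ b)
    (hdisj : Disjoint (Icc a b) (f ⁻¹' {y})) :
    segment ℝ ((a, y) : ℝ × ℝ) (b, y) ⊆ {q : ℝ × ℝ | ∃ x ∈ A, q = (x, f x)}ᶜ := by
  rintro _ hp ⟨x, -, rfl⟩
  obtain ⟨hx, hy⟩ := Prod.segment_subset _ _ hp
  rw [segment_eq_Icc hab] at hx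
  rw [segment_same] at hy
  exact disjoint_left.1 hdisj hx hy

lemma norm_mk_sub_mk_of_le {a b y : ℝ} (hab : a ≤ b) : ‖((b, y) : ℝ × ℝ) - (a, y)‖ = b - a := by
  rw [Prod.mk_sub_mk, sub_self, Prod.norm_mk, norm_zero, Real.norm_of_nonneg (sub_nonneg.2 hab),
    max_eq_left (sub_nonneg.2 hab)]

theorem bounded_gradient_acl_off_holder_graph_general
    (α : ℝ) (hα₁ : 1 / 2 < α)
    (C₁ C₂ : ℝ) (hC₁ : 0 < C₁) (hC₂ : 0 < C₂)
    (f : ℝ → ℝ)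
    (hf : ∀ s ∈ Icc (0 : ℝ) 1, ∀ t ∈ Icc (0 : ℝ) 1, |f s - f t| ≤ C₁ * |s - t| ^ α)
    (Γ : Set (ℝ × ℝ)) (hΓ : Γ = {q : ℝ × ℝ | ∃ x ∈ Icc (0 : ℝ) 1, q = (x, f x)})
    (F : ℝ × ℝ → ℝ)
    (hLip : ∀ a b : ℝ × ℝ, segment ℝ a b ⊆ Γᶜ → |F a - F b| ≤ ‖a - b‖)
    (hHolder : ∀ a b : ℝ × ℝ, |F a - F b| ≤ C₂ * ‖a - b‖ ^ α) :
    ∀ᵐ y : ℝ ∂volume, AbsolutelyContinuousOnUnitInterval fun x => F (x, y) := by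
  subst hΓ
  have hfH : HolderOnWith ⟨C₁, hC₁.le⟩ ⟨α, by linarith⟩ f (Icc 0 1) :=
    .of_dist_le fun s hs t ht => by rw [Real.dist_eq, Real.dist_eq]; exact hf s hs t ht
  filter_upwards [ae_summable_dyadicCount_preimage hfH hα₁] with y hy
  refine absolutelyContinuousOnUnitInterval_of_summable_dyadicCount (α := α) (by linarith)
    hC₂.le hy (fun a b _ hab _ hZ => ?_) fun a b _ hab _ => ?_
  · have hseg := segment_subset_compl_graph (A := Icc 0 1) hab hZ
    rw [segment_symm] at hseg
    simpa only [norm_mk_sub_mk_of_le hab] using hLip (b, y) (a, y) hseg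
  · simpa only [norm_mk_sub_mk_of_le hab] using hHolder (b, y) (a, y)

/-- P. W. Jones: Let `Γ` be a Hölder-α graph with `1/2 < α ≤ 1`. If a continuous
`F : ℝ² → ℝ` is `1`-Lipschitz along segments avoiding `Γ` and globally Hölder-α, then for almost
every `y` the function `x ↦ F (x, y)` is absolutely continuous on `[0,1]`. -/
theorem bounded_gradient_acl_off_holder_graph
    (α : ℝ) (hα₁ : 1 / 2 < α) (hα₂ : α ≤ 1)
    (C₁ C₂ : ℝ) (hC₁ : 0 < C₁) (hC₂ : 0 < C₂)
    (f : ℝ → ℝ)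
    (hf : ∀ s ∈ Icc (0 : ℝ) 1, ∀ t ∈ Icc (0 : ℝ) 1, |f s - f t| ≤ C₁ * |s - t| ^ α)
    (Γ : Set (ℝ × ℝ)) (hΓ : Γ = {q : ℝ × ℝ | ∃ x ∈ Icc (0 : ℝ) 1, q = (x, f x)})
    (F : ℝ × ℝ → ℝ) (hF_cont : Continuous F)
    (hLip : ∀ a b : ℝ × ℝ, segment ℝ a b ⊆ Γᶜ → |F a - F b| ≤ ‖a - b‖)
    (hHolder : ∀ a b : ℝ × ℝ, |F a - F b| ≤ C₂ * ‖a - b‖ ^ α) :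
    ∀ᵐ y : ℝ ∂volume, AbsolutelyContinuousOnUnitInterval fun x => F (x, y) :=
  bounded_gradient_acl_off_holder_graph_general α hα₁ C₁ C₂ hC₁ hC₂ f hf Γ hΓ F hLip hHolder
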